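/- Let Π be a normal logic program and L a consistent set of literals over Π. If for some integer i ≥ 0 one has Σ_{Γ ∈ Λ_{i+1}(Π)} |SP(Π|(L ∪ B(Γ)))| = 0, then Σ_{Γ ∈ Λ_j(Π)} |SP(Π|(L ∪ B(Γ)))| = 0 for every j ≥ i+1. (Consequently a_j^L = a_i^L for all j ≥ i.) -/

import Mathlib

open scoped Classical

/-- A normal logic program rule: head is an atom (`some a`) or ⊥ (`none`),
with positive body `pos` and negative body `neg`. -/
structure ASPRule (V : Type*) where
  head : Option V
  pos : Finset V
  neg : Finset V

/-- A normal logic program is a finite set of rules. -/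
abbrev ASPProgram (V : Type*) := Finset (ASPRule V)

variable {V : Type*}

/-- Atoms occurring in a rule. -/
noncomputable def ruleAtoms (r : ASPRule V) : Finset V :=
  r.head.toFinset ∪ r.pos ∪ r.neg

/-- `at(Π)`: atoms occurring in a program. -/
noncomputable def progAtoms (P : ASPProgram V) : Finset V := P.sup ruleAtoms

/-- The body of rule `r` is satisfied by interpretation `I`:
`B⁺(r) ⊆ I` and `B⁻(r) ∩ I = ∅`. -/
def bodySat (I : Finset V) (r : ASPRule V) : Prop :=
  r.pos ⊆ I ∧ ∀ a ∈ r.neg, a ∉ I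

/-- `I` satisfies rule `r`: whenever the body is satisfied, the head is an
atom belonging to `I` (so a constraint, with head ⊥, is satisfied iff its body is not). -/
def ruleSat (I : Finset V) (r : ASPRule V) : Prop :=
  bodySat I r → ∃ a, r.head = some a ∧ a ∈ I

/-- `I` satisfies every rule of `P`. -/
def satisfiesAll (P : ASPProgram V) (I : Finset V) : Prop := ∀ r ∈ P, ruleSat I r

/-- `I` is a model of `P` (interpretations are subsets of `at(P)`). -/
def isModel (P : ASPProgram V) (I : Finset V) : Prop :=
  I ⊆ progAtoms P ∧ satisfiesAll P I

/-- `I` is a supported model of `P`: a model in which every atom of `I` has a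
supporting rule; equivalently a model of Clark's completion `compl(P)`. -/
def isSupported (P : ASPProgram V) (I : Finset V) : Prop :=
  isModel P I ∧ ∀ a ∈ I, ∃ r ∈ P, r.head = some a ∧ bodySat I r

/-- `SP(P)`: the set of supported models of `P`,
i.e. the models of Clark's completion `compl(P)`. -/
def SP (P : ASPProgram V) : Set (Finset V) := {I | isSupported P I}

/-- The GL-reduct `P^I`. -/
noncomputable def reduct (P : ASPProgram V) (I : Finset V) : ASPProgram V :=
  (P.filter (fun r => ∀ a ∈ r.neg, a ∉ I)).image
    (fun r => (⟨r.head, r.pos, ∅⟩ : ASPRule V))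

/-- `I` is an answer set of `P`: a ⊆-minimal model of the GL-reduct `P^I`. -/
def isAnswerSet (P : ASPProgram V) (I : Finset V) : Prop :=
  I ⊆ progAtoms P ∧ satisfiesAll (reduct P I) I ∧
    ∀ J ⊆ I, satisfiesAll (reduct P I) J → J = I

/-- `AS(P)`: the set of answer sets of `P`. -/
def AS (P : ASPProgram V) : Set (Finset V) := {I | isAnswerSet P I}

/-- A literal: an atom or a negated atom. -/
inductive ASPLit (V : Type*) where
  | pos (a : V)
  | neg (a : V)

/-- The atom of a literal. -/
def litAtom : ASPLit V → V
  | .pos a => a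
  | .neg a => a

/-- Satisfaction of a literal by an interpretation. -/
def litSat (I : Finset V) : ASPLit V → Prop
  | .pos a => a ∈ I
  | .neg a => a ∉ I

/-- `ic(ℓ)`: the constraint whose body is the complementary literal of `ℓ`:
`ic(a) = (⊥ ← ¬ a)` and `ic(¬ a) = (⊥ ← a)`. -/
def ic : ASPLit V → ASPRule V
  | .pos a => ⟨none, ∅, {a}⟩
  | .neg a => ⟨none, {a}, ∅⟩

/-- `Π|L := Π ∪ {ic(ℓ) : ℓ ∈ L}`. -/
noncomputable def assumeP (P : ASPProgram V) (L : Finset (ASPLit V)) : ASPProgram V :=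
  P ∪ L.image ic

/-- `L` is a set of literals over `P`. -/
def litsOver (P : ASPProgram V) (L : Finset (ASPLit V)) : Prop :=
  ∀ ℓ ∈ L, litAtom ℓ ∈ progAtoms P

/-- `L` is consistent: it contains no atom together with its negation. -/
def consistentLits (L : Finset (ASPLit V)) : Prop :=
  ∀ a : V, ¬ (ASPLit.pos a ∈ L ∧ ASPLit.neg a ∈ L)

/-- Edge of the positive dependency digraph `DP(P)`. -/
def dpEdge (P : ASPProgram V) (a b : V) : Prop :=
  ∃ r ∈ P, a ∈ r.pos ∧ r.head = some b

/-- `C` is the vertex set of a directed cycle of `DP(P)`, i.e. of a nonempty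
directed walk whose first and last vertices coincide. -/
def isCycleSet (P : ASPProgram V) (C : Finset V) : Prop :=
  ∃ (v : V) (l : List V),
    List.Chain (dpEdge P) v (l ++ [v]) ∧ (v :: l).toFinset = C

/-- `cycles(P)`: the finite collection of vertex sets of directed cycles of `DP(P)`. -/
noncomputable def cyclesF (P : ASPProgram V) : Finset (Finset V) :=
  (progAtoms P).powerset.filter (isCycleSet P)

/-- `ES(C)`: the external supports of `C`. -/
noncomputable def extSupport (P : ASPProgram V) (C : Finset V) : Finset V :=
  (progAtoms P).filter (fun a =>
    ∃ r ∈ P, a ∈ r.pos ∧ (∃ h, r.head = some h ∧ h ∈ C) ∧ r.pos ∩ C = ∅)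

/-- The unsupported constraint `λ(C) := (⊥, C, ES(C))`. -/
noncomputable def unsupC (P : ASPProgram V) (C : Finset V) : ASPRule V :=
  ⟨none, C, extSupport P C⟩

/-- `Λ_d(P)`: the collection of sets `{λ(C) : C ∈ 𝒞}` for `𝒞 ⊆ cycles(P)` with `|𝒞| = d`. -/
noncomputable def Lam (P : ASPProgram V) (d : ℕ) : Finset (Finset (ASPRule V)) :=
  ((cyclesF P).powersetCard d).image (fun S => S.image (unsupC P))

/-- `B(Γ)`: the body literals of a set `Γ` of unsupported constraints, read as assumptions. -/
noncomputable def bodyLits (Γ : Finset (ASPRule V)) : Finset (ASPLit V) :=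
  Γ.sup (fun r => r.pos.image ASPLit.pos ∪ r.neg.image ASPLit.neg)

/-- The incremental count `a_d^L`. -/
noncomputable def incCount (P : ASPProgram V) (L : Finset (ASPLit V)) (d : ℕ) : ℤ :=
  ∑ i ∈ Finset.range (d + 1), (-1 : ℤ) ^ i *
    ∑ Γ ∈ Lam P i, ((SP (assumeP P (L ∪ bodyLits Γ))).ncard : ℤ)

/-
Adding the assumptions `ic(ℓ)` only adds constraints, so `M ↦ SP(Π|M)` is antitone; and
`Γ ↦ B(Γ)` is monotone. Every `Γ' ∈ Λ_j` with `j ≥ i + 1` contains some `Γ ∈ Λ_{i+1}`, hence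
`SP(Π|(L ∪ B(Γ'))) ⊆ SP(Π|(L ∪ B(Γ))) = ∅`. The terms of `a_j^L` beyond depth `i` then vanish.
-/

lemma ic_head (ℓ : ASPLit V) : (ic ℓ).head = none := by
  cases ℓ <;> rfl

lemma mem_progAtoms_of_head {P : ASPProgram V} {r : ASPRule V} {a : V} (hr : r ∈ P)
    (ha : r.head = some a) : a ∈ progAtoms P :=
  Finset.mem_sup.mpr ⟨r, hr, by simp [ruleAtoms, ha]⟩

lemma SP_finite (P : ASPProgram V) : (SP P).Finite :=
  (progAtoms P).powerset.finite_toSet.subset fun _ hI =>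
    Finset.mem_coe.mpr (Finset.mem_powerset.mpr hI.1.1)

/-- A supporting rule has an atom as head, so it is never one of the added constraints. -/
lemma SP_assumeP_antitone (P : ASPProgram V) {M M' : Finset (ASPLit V)} (h : M ⊆ M') :
    SP (assumeP P M') ⊆ SP (assumeP P M) := by
  rintro I ⟨⟨-, hsat⟩, hsupp⟩
  have hrule {r : ASPRule V} (hr : r ∈ assumeP P M) : r ∈ assumeP P M' :=
    Finset.union_subset_union_right (Finset.image_subset_image h) hr
  have hsupp_P : ∀ a ∈ I, ∃ r ∈ P, r.head = some a ∧ bodySat I r := by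
    intro a ha
    obtain ⟨r, hr, hhead, hbody⟩ := hsupp a ha
    rcases Finset.mem_union.mp hr with hr | hr
    · exact ⟨r, hr, hhead, hbody⟩
    · obtain ⟨ℓ, -, rfl⟩ := Finset.mem_image.mp hr
      simp [ic_head] at hhead
  refine ⟨⟨fun a ha => ?_, fun r hr => hsat r (hrule hr)⟩, fun a ha => ?_⟩
  · obtain ⟨r, hr, hhead, -⟩ := hsupp_P a ha
    exact mem_progAtoms_of_head (Finset.mem_union_left _ hr) hhead
  · obtain ⟨r, hr, hhead, hbody⟩ := hsupp_P a ha
    exact ⟨r, Finset.mem_union_left _ hr, hhead, hbody⟩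

lemma bodyLits_mono {Γ Γ' : Finset (ASPRule V)} (h : Γ ⊆ Γ') : bodyLits Γ ⊆ bodyLits Γ' :=
  Finset.sup_mono h

lemma exists_subset_mem_Lam {P : ASPProgram V} {j k : ℕ} {Γ' : Finset (ASPRule V)}
    (hΓ' : Γ' ∈ Lam P j) (hkj : k ≤ j) : ∃ Γ ∈ Lam P k, Γ ⊆ Γ' := by
  obtain ⟨S', hS', rfl⟩ := Finset.mem_image.mp hΓ'
  obtain ⟨hS'cycles, hS'card⟩ := Finset.mem_powersetCard.mp hS'
  obtain ⟨S, hSS', hScard⟩ := Finset.exists_subset_card_eq (hS'card ▸ hkj)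
  exact ⟨S.image (unsupC P),
    Finset.mem_image_of_mem _ (Finset.mem_powersetCard.mpr ⟨hSS'.trans hS'cycles, hScard⟩),
    Finset.image_subset_image hSS'⟩

lemma incCount_eq_of_forall_gt {P : ASPProgram V} {L : Finset (ASPLit V)} {i j : ℕ} (hij : i ≤ j)
    (hvanish : ∀ k, i < k → ∑ Γ ∈ Lam P k, (SP (assumeP P (L ∪ bodyLits Γ))).ncard = 0) :
    incCount P L j = incCount P L i := by
  refine (Finset.sum_subset (Finset.range_subset_range.mpr (by omega)) fun k hk hki => ?_).symm
  have hik : i < k := by simp only [Finset.mem_range] at hk hki; omega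
  rw [← Nat.cast_sum, hvanish k hik, Nat.cast_zero, mul_zero]

theorem inner_sum_vanishes_onwards_general (V : Type*) (P : ASPProgram V)
    (L : Finset (ASPLit V))
    (i : ℕ)
    (hzero : ∑ Γ ∈ Lam P (i + 1), (SP (assumeP P (L ∪ bodyLits Γ))).ncard = 0) :
    (∀ j, i + 1 ≤ j →
        ∑ Γ ∈ Lam P j, (SP (assumeP P (L ∪ bodyLits Γ))).ncard = 0) ∧
      (∀ j, i ≤ j → incCount P L j = incCount P L i) := by
  have hvanish : ∀ j, i + 1 ≤ j →
      ∑ Γ ∈ Lam P j, (SP (assumeP P (L ∪ bodyLits Γ))).ncard = 0 := by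
    intro j hj
    refine Finset.sum_eq_zero fun Γ' hΓ' => Nat.eq_zero_of_le_zero ?_
    obtain ⟨Γ, hΓ, hΓΓ'⟩ := exists_subset_mem_Lam hΓ' hj
    calc (SP (assumeP P (L ∪ bodyLits Γ'))).ncard
        ≤ (SP (assumeP P (L ∪ bodyLits Γ))).ncard :=
          Set.ncard_le_ncard (SP_assumeP_antitone P
            (Finset.union_subset_union_right (bodyLits_mono hΓΓ'))) (SP_finite _)
      _ = 0 := Finset.sum_eq_zero_iff.mp hzero Γ hΓ
  exact ⟨hvanish, fun j hij => incCount_eq_of_forall_gt hij hvanish⟩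

/-- If the inner sum vanishes at depth `i + 1`, then it vanishes
at every depth `j ≥ i + 1` (and consequently `a_j^L = a_i^L` for all `j ≥ i`). -/
theorem inner_sum_vanishes_onwards (V : Type*) (P : ASPProgram V)
    (L : Finset (ASPLit V)) (hover : litsOver P L) (hcons : consistentLits L)
    (i : ℕ)
    (hzero : ∑ Γ ∈ Lam P (i + 1), (SP (assumeP P (L ∪ bodyLits Γ))).ncard = 0) :
    (∀ j, i + 1 ≤ j →
        ∑ Γ ∈ Lam P j, (SP (assumeP P (L ∪ bodyLits Γ))).ncard = 0) ∧
      (∀ j, i ≤ j → incCount P L j = incCount P L i) :=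
  inner_sum_vanishes_onwards_general V P L i hzero
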